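/- Let k be an integral domain of characteristic zero, n = n1 + n2, let f1 ∈ k[s_1,…,s_{n1}]^{S_{n1}} and f2 ∈ k[s_{n1+1},…,s_n]^{S_{n2}}. Then the partial symmetrization Σ_σ σ · ( f1 · f2 / Π_{i ≤ n1 < j} (s_i − s_j) ), where σ runs over (n1, n2)-shuffles, computed in the fraction field, is a symmetric polynomial in s_1, …, s_n (in particular it has no poles). -/

import Mathlib

open Equiv MvPolynomial

open scoped Classical

variable {k : Type*} [CommRing k] [IsDomain k]

/-- An `(n1, n2)`-shuffle. -/
def IsShuffle (n1 n2 : ℕ) (σ : Equiv.Perm (Fin (n1 + n2))) : Prop :=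
  StrictMono (fun i : Fin n1 => σ (Fin.castAdd n2 i)) ∧
  StrictMono (fun j : Fin n2 => σ (Fin.natAdd n1 j))

/-- The field homomorphism between fraction fields of polynomial rings induced by an
injective renaming of variables. -/
noncomputable def fracMap {σ τ : Type*} (e : σ → τ) (he : Function.Injective e) :
    FractionRing (MvPolynomial σ k) →+* FractionRing (MvPolynomial τ k) :=
  IsFractionRing.lift
    (g := (algebraMap (MvPolynomial τ k) (FractionRing (MvPolynomial τ k))).comp
      (rename e : MvPolynomial σ k →ₐ[k] MvPolynomial τ k).toRingHom)
    (by
      exact (IsFractionRing.injective (MvPolynomial τ k)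
        (FractionRing (MvPolynomial τ k))).comp (rename_injective e he))

/-!
The Young subgroup `S_{n1} × S_{n2}` fixes `f1 f2 / Δ`, where `Δ = ∏_{i ≤ n1 < j} (s_i - s_j)`,
and the shuffles form a system of representatives of its left cosets. Hence the shuffle sum `S`
is really a sum over `S_n ⧸ (S_{n1} × S_{n2})` and is invariant under all of `S_n`. Every
translate `σ Δ` divides the Vandermonde polynomial `V`, so `N = S V` is a polynomial, and it is
antisymmetric because `S` is symmetric. In characteristic zero an antisymmetric polynomial
vanishes on each diagonal `s_a = s_b`, so it is divisible by each of the pairwise non-associated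
primes `s_a - s_b`, hence by `V`. Therefore `S = N / V` is a polynomial, symmetric like `S`.
-/

open Finset

def youngEmbedding (n1 n2 : ℕ) : Perm (Fin n1) × Perm (Fin n2) →* Perm (Fin (n1 + n2)) :=
  finSumFinEquiv.permCongrHom.toMonoidHom.comp (Perm.sumCongrHom _ _)

section Shuffle

variable {n1 n2 : ℕ}

@[simp]
lemma youngEmbedding_apply_castAdd (p : Perm (Fin n1) × Perm (Fin n2)) (i : Fin n1) :
    youngEmbedding n1 n2 p (Fin.castAdd n2 i) = Fin.castAdd n2 (p.1 i) := by
  simp [youngEmbedding, Equiv.permCongrHom_coe, Equiv.permCongr_apply]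

@[simp]
lemma youngEmbedding_apply_natAdd (p : Perm (Fin n1) × Perm (Fin n2)) (j : Fin n2) :
    youngEmbedding n1 n2 p (Fin.natAdd n1 j) = Fin.natAdd n1 (p.2 j) := by
  simp [youngEmbedding, Equiv.permCongrHom_coe, Equiv.permCongr_apply]

lemma exists_isShuffle_mul_youngEmbedding (w : Perm (Fin (n1 + n2))) :
    ∃ p, IsShuffle n1 n2 (w * youngEmbedding n1 n2 p) := by
  refine ⟨(Tuple.sort fun i => w (Fin.castAdd n2 i), Tuple.sort fun j => w (Fin.natAdd n1 j)),
    ?_, ?_⟩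
  all_goals simp only [Perm.mul_apply, youngEmbedding_apply_castAdd, youngEmbedding_apply_natAdd]
  · exact (Tuple.monotone_sort _).strictMono_of_injective
      ((w.injective.comp (Fin.castAdd_injective n1 n2)).comp (Equiv.injective _))
  · exact (Tuple.monotone_sort _).strictMono_of_injective
      ((w.injective.comp (Fin.natAdd_injective n2 n1)).comp (Equiv.injective _))

lemma IsShuffle.mul_youngEmbedding_eq {σ : Perm (Fin (n1 + n2))} (hσ : IsShuffle n1 n2 σ)
    {p : Perm (Fin n1) × Perm (Fin n2)} (h : IsShuffle n1 n2 (σ * youngEmbedding n1 n2 p)) :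
    σ * youngEmbedding n1 n2 p = σ := by
  have left : (fun i => (σ * youngEmbedding n1 n2 p) (Fin.castAdd n2 i)) =
      fun i => σ (Fin.castAdd n2 i) :=
    (h.1.range_inj hσ.1).mp <| by
      simp only [Perm.mul_apply, youngEmbedding_apply_castAdd]
      exact p.1.surjective.range_comp fun i => σ (Fin.castAdd n2 i)
  have right : (fun j => (σ * youngEmbedding n1 n2 p) (Fin.natAdd n1 j)) =
      fun j => σ (Fin.natAdd n1 j) :=
    (h.2.range_inj hσ.2).mp <| by
      simp only [Perm.mul_apply, youngEmbedding_apply_natAdd]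
      exact p.2.surjective.range_comp fun j => σ (Fin.natAdd n1 j)
  ext x
  induction x using Fin.addCases with
  | left i => exact congrArg Fin.val (congrFun left i)
  | right j => exact congrArg Fin.val (congrFun right j)

lemma sum_isShuffle_mul_left {M : Type*} [AddCommMonoid M] (F : Perm (Fin (n1 + n2)) → M)
    (hF : ∀ σ p, F (σ * youngEmbedding n1 n2 p) = F σ) (w : Perm (Fin (n1 + n2))) :
    ∑ σ ∈ univ.filter (IsShuffle n1 n2), F (w * σ) =
      ∑ σ ∈ univ.filter (IsShuffle n1 n2), F σ := by
  choose p hp using exists_isShuffle_mul_youngEmbedding (n1 := n1) (n2 := n2)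
  -- `r τ` is the shuffle in the coset `τ (S_{n1} × S_{n2})`.
  set r : Perm (Fin (n1 + n2)) → Perm (Fin (n1 + n2)) := fun τ => τ * youngEmbedding n1 n2 (p τ)
  have r_mul_youngEmbedding {σ} (hσ : IsShuffle n1 n2 σ) q :
      r (σ * youngEmbedding n1 n2 q) = σ := by
    have := hp (σ * youngEmbedding n1 n2 q)
    simp only [r, mul_assoc, ← map_mul] at this ⊢
    exact hσ.mul_youngEmbedding_eq this
  have r_mul_inv {σ} (hσ : IsShuffle n1 n2 σ) (v : Perm (Fin (n1 + n2))) :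
      r (v⁻¹ * r (v * σ)) = σ := by
    simpa only [r, ← mul_assoc, inv_mul_cancel, one_mul] using r_mul_youngEmbedding hσ _
  refine sum_nbij' (fun σ => r (w * σ)) (fun σ => r (w⁻¹ * σ)) (fun σ _ => by simpa using hp _)
    (fun σ _ => by simpa using hp _) (fun σ hσ => r_mul_inv (mem_filter.1 hσ).2 w)
    (fun σ hσ => by simpa using r_mul_inv (mem_filter.1 hσ).2 w⁻¹) (fun σ _ => (hF _ _).symm)

end Shuffle

theorem Finset.prod_dvd_of_primes_dvd {M α : Type*} [CommMonoidWithZero M] {s : Finset α}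
    {p : α → M} {x : M} (hp : ∀ i ∈ s, Prime (p i))
    (hne : ∀ i ∈ s, ∀ j ∈ s, p i ∣ p j → i = j) (hx : ∀ i ∈ s, p i ∣ x) :
    ∏ i ∈ s, p i ∣ x := by
  induction s using Finset.induction_on with
  | empty => simp
  | @insert a s ha ih =>
    obtain ⟨y, rfl⟩ := ih (fun i hi => hp i (mem_insert_of_mem hi))
      (fun i hi j hj => hne i (mem_insert_of_mem hi) j (mem_insert_of_mem hj))
      (fun i hi => hx i (mem_insert_of_mem hi))
    have hpa := hp a (mem_insert_self a s)
    have hpa_not_dvd : ¬ p a ∣ ∏ i ∈ s, p i := fun h => by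
      obtain ⟨j, hj, hdvd⟩ := (hpa.dvd_finsetProd_iff _).1 h
      exact ha (hne a (mem_insert_self a s) j (mem_insert_of_mem hj) hdvd ▸ hj)
    have hy : p a ∣ y := (hpa.dvd_or_dvd (hx a (mem_insert_self a s))).resolve_left hpa_not_dvd
    rw [prod_insert ha, mul_comm]
    exact mul_dvd_mul_left _ hy

namespace MvPolynomial

variable {R : Type*} [CommRing R]

section SubstVar

variable {ι : Type*} [DecidableEq ι]

noncomputable def substVar (a b : ι) : MvPolynomial ι R →ₐ[R] MvPolynomial ι R :=
  aeval (Function.update X b (X a))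

@[simp]
lemma substVar_X_self (a b : ι) : substVar (R := R) a b (X a) = X a := by
  rcases eq_or_ne a b with rfl | hab <;> simp [substVar, *]

@[simp]
lemma substVar_X_right (a b : ι) : substVar (R := R) a b (X b) = X a := by
  simp [substVar]

lemma substVar_X_of_ne {a b c : ι} (hcb : c ≠ b) : substVar (R := R) a b (X c) = X c := by
  simp [substVar, hcb]

lemma X_sub_X_dvd_sub_substVar (a b : ι) (f : MvPolynomial ι R) :
    (X a - X b : MvPolynomial ι R) ∣ f - substVar a b f := by
  set I := Ideal.span ({X a - X b} : Set (MvPolynomial ι R))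
  have : (Ideal.Quotient.mkₐ R I).comp (substVar a b) = Ideal.Quotient.mkₐ R I := by
    refine algHom_ext fun c => ?_
    rcases eq_or_ne c b with rfl | hcb
    · simp only [AlgHom.comp_apply, substVar_X_right, Ideal.Quotient.mkₐ_eq_mk]
      exact Ideal.Quotient.eq.2 (Ideal.mem_span_singleton_self _)
    · simp [substVar_X_of_ne hcb]
  rw [← Ideal.mem_span_singleton, ← Ideal.Quotient.eq, ← Ideal.Quotient.mkₐ_eq_mk R,
    ← AlgHom.comp_apply, this]

lemma X_sub_X_dvd_iff (a b : ι) (f : MvPolynomial ι R) :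
    (X a - X b : MvPolynomial ι R) ∣ f ↔ substVar a b f = 0 := by
  refine ⟨fun ⟨g, hg⟩ => by simp [hg], fun h => ?_⟩
  simpa [h] using X_sub_X_dvd_sub_substVar a b f

lemma substVar_rename_swap (a b : ι) (f : MvPolynomial ι R) :
    substVar a b (rename (swap a b) f) = substVar a b f := by
  rw [← AlgHom.comp_apply]
  congr 1
  refine algHom_ext fun c => ?_
  rcases eq_or_ne c a with rfl | hca
  · simp
  rcases eq_or_ne c b with rfl | hcb
  · simp
  · simp [swap_apply_of_ne_of_ne hca hcb, substVar_X_of_ne hcb]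

lemma prime_X_sub_X [IsDomain R] {a b : ι} (hab : a ≠ b) :
    Prime (X a - X b : MvPolynomial ι R) := by
  refine ⟨sub_ne_zero.2 (X_injective.ne hab), fun hu => ?_, fun f g h => ?_⟩
  · simpa using hu.map (substVar (R := R) a b)
  · simpa only [X_sub_X_dvd_iff, map_mul, mul_eq_zero] using h

lemma X_sub_X_dvd_of_rename_swap [IsDomain R] [CharZero R] (a b : ι) {f : MvPolynomial ι R}
    (h : rename (swap a b) f = -f) : (X a - X b : MvPolynomial ι R) ∣ f := by
  have := substVar_rename_swap (R := R) a b f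
  rw [h, map_neg] at this
  exact (X_sub_X_dvd_iff a b f).2 (self_eq_neg.1 this.symm)

end SubstVar

section Vandermonde

variable {n : ℕ}

lemma eq_of_X_sub_X_dvd_X_sub_X [Nontrivial R] {i j i' j' : Fin n} (hij : i < j)
    (hij' : i' < j') (h : (X j - X i : MvPolynomial (Fin n) R) ∣ X j' - X i') :
    i = i' ∧ j = j' := by
  rw [X_sub_X_dvd_iff, map_sub, sub_eq_zero] at h
  by_cases hj' : j' = i <;> by_cases hi' : i' = i <;>
    simp only [hj', hi', substVar_X_right, substVar_X_of_ne, ne_eq, not_false_eq_true,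
      X_inj] at h <;> grind

variable (R n) in
noncomputable def vandermonde : MvPolynomial (Fin n) R :=
  (Matrix.vandermonde X).det

lemma vandermonde_eq_prod :
    vandermonde R n = ∏ i : Fin n, ∏ j ∈ Ioi i, (X j - X i) :=
  Matrix.det_vandermonde _

lemma vandermonde_ne_zero [IsDomain R] : vandermonde R n ≠ 0 :=
  Matrix.det_vandermonde_ne_zero_iff.2 X_injective

lemma rename_vandermonde (w : Perm (Fin n)) :
    rename w (vandermonde R n) = (Perm.sign w : ℤ) • vandermonde R n := by
  have : (rename w : MvPolynomial (Fin n) R →ₐ[R] _).mapMatrix (Matrix.vandermonde X) =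
      (Matrix.vandermonde X).submatrix w id := by
    ext i j
    simp [Matrix.vandermonde]
  rw [vandermonde, AlgHom.map_det, this, Matrix.det_permute, zsmul_eq_mul]

lemma rename_dvd_vandermonde {f : MvPolynomial (Fin n) R} (hf : f ∣ vandermonde R n)
    (w : Perm (Fin n)) : rename w f ∣ vandermonde R n := by
  have := map_dvd (rename w) hf
  rw [rename_vandermonde] at this
  rcases Int.units_eq_one_or (Perm.sign w) with h | h <;> simpa [h] using this

lemma vandermonde_dvd_of_rename_swap [IsDomain R] [CharZero R] {f : MvPolynomial (Fin n) R}
    (hf : ∀ a b, a ≠ b → rename (swap a b) f = -f) : vandermonde R n ∣ f := by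
  rw [vandermonde_eq_prod, prod_sigma']
  refine prod_dvd_of_primes_dvd (fun q hq => ?_) (fun q hq q' hq' h => ?_) fun q hq => ?_
  · exact prime_X_sub_X (mem_Ioi.1 (mem_sigma.1 hq).2).ne'
  · obtain ⟨h1, h2⟩ := eq_of_X_sub_X_dvd_X_sub_X (mem_Ioi.1 (mem_sigma.1 hq).2)
      (mem_Ioi.1 (mem_sigma.1 hq').2) h
    exact Sigma.ext h1 (heq_of_eq h2)
  · have hlt := mem_Ioi.1 (mem_sigma.1 hq).2
    exact X_sub_X_dvd_of_rename_swap q.2 q.1 (hf q.2 q.1 hlt.ne')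

end Vandermonde

section Young

variable {n1 n2 : ℕ}

variable (R n1 n2) in
/-- The denominator `∏_{i ≤ n1 < j} (s_i - s_j)`, the Euler class `e(g_v[-1])` of the paper. -/
noncomputable def crossVandermonde : MvPolynomial (Fin (n1 + n2)) R :=
  ∏ i : Fin n1, ∏ j : Fin n2, (X (Fin.castAdd n2 i) - X (Fin.natAdd n1 j))

lemma crossVandermonde_dvd_vandermonde :
    crossVandermonde R n1 n2 ∣ vandermonde R (n1 + n2) := by
  rw [vandermonde_eq_prod, Fin.prod_univ_add]
  refine dvd_mul_of_dvd_left (prod_dvd_prod_of_dvd _ _ fun i _ => ?_) _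
  calc ∏ j : Fin n2, (X (Fin.castAdd n2 i) - X (Fin.natAdd n1 j) : MvPolynomial _ R)
      ∣ ∏ j ∈ univ.map (Fin.natAddEmb n1), (X j - X (Fin.castAdd n2 i)) := by
        rw [prod_map]
        exact prod_dvd_prod_of_dvd _ _ fun j _ => dvd_sub_comm.1 dvd_rfl
    _ ∣ ∏ j ∈ Ioi (Fin.castAdd n2 i), (X j - X (Fin.castAdd n2 i)) := by
        refine prod_dvd_prod_of_subset _ _ _ fun x hx => ?_
        obtain ⟨j, -, rfl⟩ := mem_map.1 hx
        simp [Fin.lt_def]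
        omega

lemma rename_youngEmbedding_crossVandermonde (p : Perm (Fin n1) × Perm (Fin n2)) :
    rename (youngEmbedding n1 n2 p) (crossVandermonde R n1 n2) = crossVandermonde R n1 n2 := by
  simp only [crossVandermonde, map_prod, map_sub, rename_X, youngEmbedding_apply_castAdd,
    youngEmbedding_apply_natAdd]
  rw [Equiv.prod_comp p.1 fun i => ∏ j, (X (Fin.castAdd n2 i) - X (Fin.natAdd n1 (p.2 j)))]
  exact prod_congr rfl fun i _ =>
    Equiv.prod_comp p.2 fun j => (X (Fin.castAdd n2 i) - X (Fin.natAdd n1 j) : MvPolynomial _ R)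

lemma rename_youngEmbedding_mul_of_isSymmetric {f1 : MvPolynomial (Fin n1) R}
    {f2 : MvPolynomial (Fin n2) R} (hf1 : f1.IsSymmetric) (hf2 : f2.IsSymmetric)
    (p : Perm (Fin n1) × Perm (Fin n2)) :
    rename (youngEmbedding n1 n2 p) (rename (Fin.castAdd n2) f1 * rename (Fin.natAdd n1) f2) =
      rename (Fin.castAdd n2) f1 * rename (Fin.natAdd n1) f2 := by
  have h1 : ⇑(youngEmbedding n1 n2 p) ∘ Fin.castAdd n2 = Fin.castAdd n2 ∘ p.1 :=
    _root_.funext (youngEmbedding_apply_castAdd p)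
  have h2 : ⇑(youngEmbedding n1 n2 p) ∘ Fin.natAdd n1 = Fin.natAdd n1 ∘ p.2 :=
    _root_.funext (youngEmbedding_apply_natAdd p)
  rw [map_mul, rename_rename, rename_rename, h1, h2, ← rename_rename, ← rename_rename, hf1, hf2]

end Young

end MvPolynomial

section FractionField

variable {ι κ : Type*}

lemma fracMap_algebraMap (e : ι → κ) (he : Function.Injective e) (f : MvPolynomial ι k) :
    fracMap e he (algebraMap _ (FractionRing _) f) =
      algebraMap _ (FractionRing (MvPolynomial κ k)) (rename e f) :=
  IsFractionRing.lift_algebraMap _ _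

lemma fracMap_mul (w v : Perm ι) (x : FractionRing (MvPolynomial ι k)) :
    fracMap (⇑(w * v)) (w * v).injective x =
      fracMap w w.injective (fracMap v v.injective x) := by
  have : fracMap (k := k) (⇑(w * v)) (w * v).injective =
      (fracMap w w.injective).comp (fracMap v v.injective) :=
    IsLocalization.ringHom_ext (nonZeroDivisors (MvPolynomial ι k)) <| RingHom.ext fun f => by
      simp [fracMap_algebraMap, rename_rename]
  exact DFunLike.congr_fun this x

lemma fracMap_sum_isShuffle {n1 n2 : ℕ} {A : FractionRing (MvPolynomial (Fin (n1 + n2)) k)}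
    (hA : ∀ p, fracMap (youngEmbedding n1 n2 p) (youngEmbedding n1 n2 p).injective A = A)
    (w : Perm (Fin (n1 + n2))) :
    fracMap w w.injective (∑ σ ∈ univ.filter (IsShuffle n1 n2), fracMap σ σ.injective A) =
      ∑ σ ∈ univ.filter (IsShuffle n1 n2), fracMap σ σ.injective A := by
  rw [map_sum]
  simp_rw [← fracMap_mul]
  exact sum_isShuffle_mul_left (fun σ => fracMap σ σ.injective A)
    (fun σ p => by rw [fracMap_mul, hA]) w

lemma fracMap_div_mul_vandermonde_mem_range {n : ℕ} (P Q : MvPolynomial (Fin n) k)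
    (hQ : Q ∣ vandermonde k n) (w : Perm (Fin n)) :
    fracMap w w.injective (algebraMap _ _ P / algebraMap _ _ Q) *
        algebraMap _ (FractionRing (MvPolynomial (Fin n) k)) (vandermonde k n) ∈
      (algebraMap (MvPolynomial (Fin n) k) (FractionRing (MvPolynomial (Fin n) k))).range := by
  obtain ⟨c, hc⟩ := rename_dvd_vandermonde hQ w
  have hwQ : algebraMap _ (FractionRing (MvPolynomial (Fin n) k)) (rename w Q) ≠ 0 :=
    (map_ne_zero_iff _ (IsFractionRing.injective _ _)).2
      (left_ne_zero_of_mul (hc ▸ vandermonde_ne_zero))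
  refine ⟨rename w P * c, ?_⟩
  rw [map_div₀, fracMap_algebraMap, fracMap_algebraMap, hc, map_mul, map_mul, ← mul_assoc,
    div_mul_cancel₀ _ hwQ]

lemma exists_isSymmetric_of_mul_vandermonde_mem_range [CharZero k] {n : ℕ}
    {x : FractionRing (MvPolynomial (Fin n) k)}
    (hx : ∀ w : Perm (Fin n), fracMap w w.injective x = x)
    (hxV : x * algebraMap _ _ (vandermonde k n) ∈
      (algebraMap (MvPolynomial (Fin n) k) (FractionRing (MvPolynomial (Fin n) k))).range) :
    ∃ g : MvPolynomial (Fin n) k, g.IsSymmetric ∧ algebraMap _ _ g = x := by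
  set ι := algebraMap (MvPolynomial (Fin n) k) (FractionRing (MvPolynomial (Fin n) k))
  have hι : Function.Injective ι := IsFractionRing.injective _ _
  obtain ⟨N, hN⟩ := hxV
  have hN_swap (a b : Fin n) (hab : a ≠ b) : rename (swap a b) N = -N := hι <| by
    rw [← fracMap_algebraMap _ (swap a b).injective, hN, map_mul, hx, fracMap_algebraMap,
      rename_vandermonde, Perm.sign_swap hab]
    simpa using hN.symm
  obtain ⟨g, rfl⟩ := vandermonde_dvd_of_rename_swap hN_swap
  have hg : ι g = x := mul_right_cancel₀ ((map_ne_zero_iff _ hι).2 vandermonde_ne_zero)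
    (by rw [← hN, map_mul, mul_comm])
  refine ⟨g, fun w => hι ?_, hg⟩
  rw [← fracMap_algebraMap _ w.injective, hg, hx]

end FractionField

/-- for `f1` symmetric in the first `n1` variables and `f2` symmetric in the last
`n2` variables, the partial (shuffle) symmetrization
`Σ_σ σ·( f1·f2 / Π_{i ≤ n1 < j}(s_i − s_j) )` over `(n1,n2)`-shuffles, computed in the
fraction field, is (the image of) a symmetric polynomial in all `n = n1 + n2` variables;
in particular it has no poles. -/
theorem shuffle_pushforward_is_symmetric_polynomial
    [CharZero k] (n1 n2 : ℕ)
    (f1 : MvPolynomial (Fin n1) k) (hf1 : ∀ τ : Equiv.Perm (Fin n1), rename (⇑τ) f1 = f1)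
    (f2 : MvPolynomial (Fin n2) k) (hf2 : ∀ τ : Equiv.Perm (Fin n2), rename (⇑τ) f2 = f2) :
    ∃ g : MvPolynomial (Fin (n1 + n2)) k,
      (∀ w : Equiv.Perm (Fin (n1 + n2)), rename (⇑w) g = g) ∧
      algebraMap (MvPolynomial (Fin (n1 + n2)) k)
          (FractionRing (MvPolynomial (Fin (n1 + n2)) k)) g =
        ∑ σ : Equiv.Perm (Fin (n1 + n2)),
          if IsShuffle n1 n2 σ then
            fracMap (⇑σ) σ.injective
              (algebraMap (MvPolynomial (Fin (n1 + n2)) k)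
                  (FractionRing (MvPolynomial (Fin (n1 + n2)) k))
                  (rename (Fin.castAdd n2) f1 * rename (Fin.natAdd n1) f2) /
                algebraMap (MvPolynomial (Fin (n1 + n2)) k)
                  (FractionRing (MvPolynomial (Fin (n1 + n2)) k))
                  (∏ i : Fin n1, ∏ j : Fin n2,
                    (X (Fin.castAdd n2 i) - X (Fin.natAdd n1 j))))
          else 0 := by
  set ι := algebraMap (MvPolynomial (Fin (n1 + n2)) k)
    (FractionRing (MvPolynomial (Fin (n1 + n2)) k))
  set P := rename (Fin.castAdd n2) f1 * rename (Fin.natAdd n1) f2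
  have hA (p : Perm (Fin n1) × Perm (Fin n2)) :
      fracMap (youngEmbedding n1 n2 p) (youngEmbedding n1 n2 p).injective
        (ι P / ι (crossVandermonde k n1 n2)) = ι P / ι (crossVandermonde k n1 n2) := by
    rw [map_div₀, fracMap_algebraMap, fracMap_algebraMap,
      rename_youngEmbedding_mul_of_isSymmetric hf1 hf2, rename_youngEmbedding_crossVandermonde]
  rw [← sum_filter]
  refine exists_isSymmetric_of_mul_vandermonde_mem_range (fracMap_sum_isShuffle hA) ?_
  rw [sum_mul]
  exact Subring.sum_mem _ fun σ _ =>
    fracMap_div_mul_vandermonde_mem_range P _ crossVandermonde_dvd_vandermonde σ
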